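/- Let ℙ = {1, 2, 3, …} with the discrete topology, let A = Π_{n=1}^∞ ℙ^∞ be the product of the one-point compactifications of ℙ, let W_0 = ({0} ∪ ∪_{k=1}^∞ ℙ^k) ∪ Π_{n=1}^∞ ℙ, and let Y_0 = {0} ∪ ∪_{k=1}^∞ ℙ^k be the set of finite strings. Define β : A → 2^{Y_0} by β(x)(y) = 1 iff x begins with y (i.e. y is an initial segment of x read before truncation at its first infinite coordinate), and α : W_0 → 2^{Y_0} by α(w)(y) = 1 iff y is an initial segment of w. Then β is continuous, β = α ∘ Q, and consequently the quotient topology on W_0 induced by Q coincides with the topology on W_0 obtained by pulling back the product topology of 2^{Y_0} along the injection α. -/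

import Mathlib

open Filter Topology

/-- The set `W₀ = Y₀ ∪ Z`: the disjoint union of the finite products
`Y^k = X_1 × ⋯ × X_k` (with `Y^0 = {0}` a single point, the empty string) and the
infinite product `Z = Π_{n} X_n`.  (Indices are `0`-based here: `X 0, X 1, …` play the
roles of `X_1, X_2, …`.) -/
def W0 (X : ℕ → Type) : Type := (Σ k : ℕ, ∀ i : Fin k, X i) ⊕ (∀ n, X n)

namespace W0

variable {X : ℕ → Type}

/-- A finite string, an element of `Y₀ = ∪_k Y^k ⊂ W₀`. -/
def fin (p : Σ k : ℕ, ∀ i : Fin k, X i) : W0 X := Sum.inl p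

/-- An infinite string, an element of `Z = Π_n X_n ⊂ W₀`. -/
def inf (z : ∀ n, X n) : W0 X := Sum.inr z

/-- The point `0`, the empty string: the unique element of `Y^0`. -/
def zero : W0 X := Sum.inl ⟨0, fun i => i.elim0⟩

/-- The length `ℓ(w) ∈ ℕ ∪ {∞}` of an element of `W₀`. -/
def len : W0 X → ℕ∞ := Sum.elim (fun p => (p.1 : ℕ∞)) (fun _ => ⊤)

/-- The `i`-th coordinate of an element of `W₀`, as an element of the one-point
compactification `X_i^∞`; it is taken to be `∞_i` when `i ≥ ℓ(w)`. -/
def coord (w : W0 X) (i : ℕ) : OnePoint (X i) :=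
  Sum.elim
    (fun p : Σ k : ℕ, ∀ j : Fin k, X j =>
      if h : i < p.1 then ((p.2 ⟨i, h⟩ : X i) : OnePoint (X i)) else OnePoint.infty)
    (fun z => ((z i : X i) : OnePoint (X i))) w

/-- The value of a point of `X^∞` other than `∞`. -/
noncomputable def val {Y : Type} (o : OnePoint Y) (h : o ≠ OnePoint.infty) : Y :=
  (OnePoint.ne_infty_iff_exists.mp h).choose

open Classical in
/-- The truncation map `Q : A = Π_n X_n^∞ → W₀`: `Q({x_i}) = {x_i} ∈ Z` if no
coordinate is a point at infinity; `Q({x_i}) = (x_1, …, x_n) ∈ Y^n` if `n` is smallest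
with `x_{n+1} = ∞_{n+1}`; `Q({x_i}) = 0` if `x_1 = ∞_1`. -/
noncomputable def Q (x : ∀ n, OnePoint (X n)) : W0 X :=
  if h : ∃ n, x n = OnePoint.infty then
    fin ⟨Nat.find h, fun i => val (x i) (Nat.find_min h i.isLt)⟩
  else
    inf fun n => val (x n) (fun hn => h ⟨n, hn⟩)

/-- `W₀` carries the quotient topology induced by the surjection `Q` from the product
`A = Π_n X_n^∞` of the one-point compactifications. -/
noncomputable instance [∀ n, TopologicalSpace (X n)] : TopologicalSpace (W0 X) :=
  TopologicalSpace.coinduced Q Pi.topologicalSpace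

end W0

/-- `ℙ = {1, 2, 3, …}` carries the discrete topology. -/
instance : TopologicalSpace ℕ+ := ⊥

instance : DiscreteTopology ℕ+ := ⟨rfl⟩

/-- `W₀` for the Cuntz graph `𝓔_∞`: finite and infinite strings over `ℙ`. -/
abbrev W0P : Type := W0 (fun _ => ℕ+)

/-- `Y₀`: the set of finite strings over `ℙ` (including the empty string `0`). -/
def Y0P : Type := Σ k : ℕ, Fin k → ℕ+

open Classical in
/-- `β : A → 2^{Y₀}`: `β(x)(y) = 1` iff `x` begins with `y`, i.e. the first `ℓ(y)`
coordinates of `x` lie in `ℙ` and equal those of `y`. -/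
noncomputable def betaP (x : ∀ _ : ℕ, OnePoint ℕ+) : Y0P → Bool := fun y =>
  if ∀ i : Fin y.1, x i = ((y.2 i : ℕ+) : OnePoint ℕ+) then true else false

open Classical in
/-- `α : W₀ → 2^{Y₀}`: `α(w)(y) = 1` iff `y` is an initial segment of `w`. -/
noncomputable def alphaP (w : W0P) : Y0P → Bool := fun y =>
  if (y.1 : ℕ∞) ≤ W0.len w ∧ ∀ i : Fin y.1, W0.coord w i = ((y.2 i : ℕ+) : OnePoint ℕ+)
    then true else false

/-!
`β(x)(y)` depends only on the first `ℓ(y)` coordinates of `x`, each tested against a point of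
`ℙ`, which is clopen in `ℙ^∞`; so `β` is continuous. The truncation `Q` keeps exactly the
coordinates before the first `∞`, and those are all that `β` reads, whence `β = α ∘ Q`.
Finally `α` is injective and continuous on the quotient `W₀`, which is compact as an image
of `A`; a continuous injection from a compact space into the Hausdorff space `2^{Y₀}` is a
closed embedding, so the quotient topology is the one induced by `α`.
-/

theorem TopologicalSpace.coinduced_eq_induced_of_continuous_comp {A W B : Type*}
    [TopologicalSpace A] [CompactSpace A] [TopologicalSpace B] [T2Space B] {q : A → W}
    {g : W → B} (hq : Function.Surjective q) (hg : Function.Injective g)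
    (hgq : Continuous (g ∘ q)) :
    TopologicalSpace.coinduced q ‹_› = TopologicalSpace.induced g ‹_› := by
  let : TopologicalSpace W := TopologicalSpace.coinduced q ‹_›
  have hq' : Topology.IsQuotientMap q := ⟨⟨rfl⟩, hq⟩
  have : CompactSpace W := hq.compactSpace hq'.continuous
  exact ((hq'.continuous_iff.mpr hgq).isClosedEmbedding hg).eq_induced

namespace W0

variable {X : ℕ → Type}

theorem coe_val {Y : Type} (o : OnePoint Y) (h : o ≠ OnePoint.infty) :
    ((val o h : Y) : OnePoint Y) = o :=
  (OnePoint.ne_infty_iff_exists.mp h).choose_spec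

theorem coord_ne_infty_iff {w : W0 X} {i : ℕ} :
    coord w i ≠ OnePoint.infty ↔ (i : ℕ∞) < len w := by
  rcases w with ⟨k, f⟩ | z
  · by_cases h : i < k <;> simp [coord, len, h]
  · simp [coord, len]

theorem coord_ne_infty_of_le {w : W0 X} {i j : ℕ} (h : coord w i ≠ OnePoint.infty)
    (hji : j ≤ i) : coord w j ≠ OnePoint.infty :=
  coord_ne_infty_iff.mpr ((Nat.cast_le.mpr hji).trans_lt (coord_ne_infty_iff.mp h))

theorem coe_le_len_of_forall_coord_ne_infty {w : W0 X} {k : ℕ}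
    (h : ∀ i : Fin k, coord w i ≠ OnePoint.infty) : (k : ℕ∞) ≤ len w := by
  cases k with
  | zero => simp
  | succ k => exact Order.add_one_le_of_lt (coord_ne_infty_iff.mp (h (Fin.last k)))

theorem coord_injective : Function.Injective (coord : W0 X → ∀ i, OnePoint (X i)) := by
  intro w w' h
  have hlen : len w = len w' := by
    have len_le {v v' : W0 X} (h : coord v = coord v') : len v ≤ len v' :=
      le_of_forall_lt fun c hc => by
        lift c to ℕ using hc.ne_top
        exact coord_ne_infty_iff.mp (h ▸ coord_ne_infty_iff.mpr hc)
    exact le_antisymm (len_le h) (len_le h.symm)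
  rcases w with ⟨k, f⟩ | z <;> rcases w' with ⟨k', f'⟩ | z' <;> simp only [len, Sum.elim_inl,
    Sum.elim_inr, Nat.cast_inj, ENat.natCast_ne_top, ENat.top_ne_natCast] at hlen
  · subst hlen
    congr
    funext i
    simpa [coord] using congrFun h i
  · congr
    funext i
    simpa [coord] using congrFun h i

open Classical in
theorem coord_Q (x : ∀ n, OnePoint (X n)) (i : ℕ) :
    coord (Q x) i = if ∀ j ≤ i, x j ≠ OnePoint.infty then x i else OnePoint.infty := by
  unfold Q
  split_ifs with hex hi hi
  · have hlt : i < Nat.find hex := (Nat.lt_find_iff _ _).mpr hi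
    simp [fin, coord, hlt, coe_val]
  · push Not at hi
    obtain ⟨j, hji, hj⟩ := hi
    have hle : Nat.find hex ≤ i := (Nat.find_min' hex hj).trans hji
    simp [fin, coord, not_lt.mpr hle]
  · simp [inf, coord, coe_val]
  · push Not at hi
    obtain ⟨j, -, hj⟩ := hi
    exact (hex ⟨j, hj⟩).elim

theorem Q_coord (w : W0 X) : Q (coord w) = w := by
  refine coord_injective (funext fun i => ?_)
  rw [coord_Q]
  split_ifs with h
  · rfl
  · push Not at h
    obtain ⟨j, hji, hj⟩ := h
    by_contra hi
    exact coord_ne_infty_of_le (Ne.symm hi) hji hj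

theorem Q_surjective : Function.Surjective (Q : (∀ n, OnePoint (X n)) → W0 X) :=
  Function.LeftInverse.surjective Q_coord

theorem forall_coord_Q_eq_iff {x : ∀ n, OnePoint (X n)} {k : ℕ} {c : ∀ i : Fin k, X i} :
    (∀ i : Fin k, coord (Q x) i = c i) ↔ ∀ i : Fin k, x i = c i := by
  constructor
  · intro h i
    have hi := h i
    rw [coord_Q] at hi
    split_ifs at hi
    · exact hi
    · exact (OnePoint.coe_ne_infty _ hi.symm).elim
  · intro h i
    rw [coord_Q, if_pos, h i]
    intro j hji
    rw [h ⟨j, hji.trans_lt i.isLt⟩]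
    exact OnePoint.coe_ne_infty _

end W0

theorem betaP_eq_true_iff {x : ∀ _ : ℕ, OnePoint ℕ+} {y : Y0P} :
    betaP x y = true ↔ ∀ i : Fin y.1, x i = y.2 i := by
  simp [betaP]

theorem alphaP_eq_true_iff {w : W0P} {y : Y0P} :
    alphaP w y = true ↔ ∀ i : Fin y.1, W0.coord w i = y.2 i := by
  by_cases h : ∀ i : Fin y.1, W0.coord w i = y.2 i
  · have hlen := W0.coe_le_len_of_forall_coord_ne_infty fun i => h i ▸ OnePoint.coe_ne_infty _
    simp [alphaP, h, hlen]
  · simp [alphaP, h]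

theorem coord_eq_of_alphaP_eq {w w' : W0P} (h : alphaP w = alphaP w') {i : ℕ}
    (hi : W0.coord w i ≠ OnePoint.infty) : W0.coord w' i = W0.coord w i := by
  have hpre : ∀ j : Fin (i + 1), ∃ a : ℕ+, (a : OnePoint ℕ+) = W0.coord w j := fun j =>
    OnePoint.ne_infty_iff_exists.mp (W0.coord_ne_infty_of_le hi (Nat.lt_succ_iff.mp j.isLt))
  -- `c` is the prefix of `w` of length `i + 1`, which `w'` must begin with as well
  choose c hc using hpre
  have hw : alphaP w ⟨i + 1, c⟩ = true := alphaP_eq_true_iff.mpr fun j => (hc j).symm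
  rw [h] at hw
  simpa [hc] using alphaP_eq_true_iff.mp hw (Fin.last i)

theorem alphaP_injective : Function.Injective alphaP := by
  intro w w' h
  refine W0.coord_injective (funext fun i => ?_)
  by_cases hi : W0.coord w i = OnePoint.infty
  · by_cases hi' : W0.coord w' i = OnePoint.infty
    · rw [hi, hi']
    · exact coord_eq_of_alphaP_eq h.symm hi'
  · exact (coord_eq_of_alphaP_eq h hi).symm

theorem continuous_betaP : Continuous betaP := by
  refine continuous_pi fun y => (continuous_bool_rng true).mpr ?_
  have hcyl : (fun x => betaP x y) ⁻¹' {true} =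
      ⋂ i : Fin y.1, (fun x : ∀ _ : ℕ, OnePoint ℕ+ => x i) ⁻¹' {(y.2 i : OnePoint ℕ+)} := by
    ext x
    simp [betaP_eq_true_iff]
  rw [hcyl]
  refine isClopen_iInter_of_finite fun i => IsClopen.preimage ⟨isClosed_singleton, ?_⟩
    (continuous_apply _)
  simpa using OnePoint.isOpenMap_coe {y.2 i} (isOpen_discrete _)

theorem betaP_eq_alphaP_comp_Q : betaP = alphaP ∘ W0.Q :=
  funext fun x => funext fun _ => Bool.eq_iff_iff.mpr <| by
    rw [Function.comp_apply, betaP_eq_true_iff, alphaP_eq_true_iff, W0.forall_coord_Q_eq_iff]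

/-- `β` is continuous, `β = α ∘ Q`, and consequently the quotient topology on `W₀`
induced by `Q` coincides with the topology pulled back from the product topology on
`2^{Y₀}` along the injection `α`. -/
theorem stmt11 :
    Continuous betaP ∧ betaP = alphaP ∘ W0.Q ∧
      (inferInstanceAs (TopologicalSpace W0P) =
        TopologicalSpace.induced alphaP inferInstance) :=
  ⟨continuous_betaP, betaP_eq_alphaP_comp_Q,
    TopologicalSpace.coinduced_eq_induced_of_continuous_comp W0.Q_surjective alphaP_injective
      (betaP_eq_alphaP_comp_Q ▸ continuous_betaP)⟩
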